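/- arXiv:2007.07545 — 3 statements merged into one kernel-verified Lean document; each statement's English description precedes it below -/
import Mathlib

section
/- (Vaserstein) Let R be a commutative ring, r ≥ 3, and let v = (v₁, …, v_r) ∈ Um_r(R) and w = (w₁, …, w_r) ∈ Rʳ satisfy ∑_{i=1}^{r} v_i w_i = 1. Then for all indices 1 ≤ i, j ≤ r, the row (v₁, …, v_{i−1}, w_i, v_{i+1}, …, v_r) is E_r(R)-equivalent to the row (v₁, …, v_{j−1}, w_j, v_{j+1}, …, v_r). -/
set_option linter.unusedSectionVars false

open Matrix Polynomial

/-- The set of elementary matrices `eᵢⱼ(a) = 1 + a·Eᵢⱼ`, `i ≠ j`. -/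
def ElemSet (R : Type*) [CommRing R] (n : ℕ) : Set (Matrix (Fin n) (Fin n) R) :=
  { E | ∃ (i j : Fin n) (a : R), i ≠ j ∧ E = 1 + Matrix.single i j a }

/-- The elementary group `Eₙ(R)`, as the multiplicative closure of elementary matrices. -/
def ElemGroup (R : Type*) [CommRing R] (n : ℕ) : Submonoid (Matrix (Fin n) (Fin n) R) :=
  Submonoid.closure (ElemSet R n)

/-- A row is unimodular if its entries generate the unit ideal. -/
def IsUnimodular {R : Type*} [CommRing R] {n : ℕ} (v : Fin n → R) : Prop :=
  ∃ w : Fin n → R, ∑ i, v i * w i = 1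

section Infra

variable {R : Type*} [CommRing R] {r : ℕ}

/-- E-equivalence of rows. -/
def ERel (u v : Fin r → R) : Prop := ∃ ε ∈ ElemGroup R r, Matrix.vecMul u ε = v

lemma ERel.refl (u : Fin r → R) : ERel u u := ⟨1, one_mem _, by simp⟩

lemma ERel.trans {u v w : Fin r → R} (h1 : ERel u v) (h2 : ERel v w) : ERel u w := by
  obtain ⟨ε1, hε1, h1⟩ := h1
  obtain ⟨ε2, hε2, h2⟩ := h2
  exact ⟨ε1 * ε2, mul_mem hε1 hε2, by rw [← Matrix.vecMul_vecMul, h1, h2]⟩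

/-- single elementary column operation on a row: add `u i * m` to coordinate `j`. -/
lemma ERel.step (u : Fin r → R) {i j : Fin r} (hij : i ≠ j) (m : R) :
    ERel u (Function.update u j (u j + u i * m)) := by
  refine ⟨1 + Matrix.single i j m, Submonoid.subset_closure ⟨i, j, m, hij, rfl⟩, ?_⟩
  funext k
  rw [Matrix.vecMul_add, Matrix.vecMul_one]
  have hstd : Matrix.vecMul u (Matrix.single i j m) k = if k = j then u i * m else 0 := by
    simp only [Matrix.vecMul, dotProduct, Matrix.single, Matrix.of_apply]
    rcases eq_or_ne k j with rfl | hk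
    · simp only [if_pos rfl]
      rw [Finset.sum_eq_single i]
      · simp
      · intro l _ hl; simp [hl, Ne.symm hl]
      · simp
    · simp only [if_neg hk]
      apply Finset.sum_eq_zero
      intro l _
      simp [hk.symm]
  rcases eq_or_ne k j with rfl | hk
  · simp [hstd, Function.update_self]
  · simp [Pi.add_apply, hstd, hk, Function.update_of_ne hk]

/-- add an arbitrary combination `∑ l, u l * γ l` (with `γ m = 0`) to coordinate `m`. -/
lemma ERel.sumstep (u : Fin r → R) (m : Fin r) (γ : Fin r → R) (hγ : γ m = 0) :
    ERel u (Function.update u m (u m + ∑ l, u l * γ l)) := by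
  classical
  suffices H : ∀ s : Finset (Fin r), m ∉ s →
      ERel u (Function.update u m (u m + ∑ l ∈ s, u l * γ l)) by
    have h0 : ∑ l, u l * γ l = ∑ l ∈ Finset.univ.erase m, u l * γ l := by
      rw [Finset.sum_erase _ (by simp [hγ])]
    rw [h0]
    exact H _ (Finset.notMem_erase m _)
  intro s
  induction s using Finset.induction_on with
  | empty => intro _; simpa using ERel.refl u
  | @insert a s ha ih =>
      intro hms
      have hma : a ≠ m := fun h => hms (by simp [h])
      have hmns : m ∉ s := fun h => hms (by simp [h])
      have h1 := ih hmns
      set u₁ := Function.update u m (u m + ∑ l ∈ s, u l * γ l) with hu₁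
      have h2 := ERel.step u₁ hma (γ a)
      have e1 : u₁ a = u a := Function.update_of_ne hma _ _
      have e2 : u₁ m = u m + ∑ l ∈ s, u l * γ l := Function.update_self _ _ _
      rw [e1, e2, hu₁, Function.update_idem] at h2
      have e3 : u m + ∑ l ∈ s, u l * γ l + u a * γ a = u m + ∑ l ∈ insert a s, u l * γ l := by
        rw [Finset.sum_insert ha]; ring
      rw [e3] at h2
      exact h1.trans h2

end Infra

section Row3

variable {R : Type*} [CommRing R] {r : ℕ}

/-- a row which agrees with `v` outside `{i,j,k}`. -/
def row3 (v : Fin r → R) (i j k : Fin r) (x y z : R) : Fin r → R :=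
  fun l => if l = i then x else if l = j then y else if l = k then z else v l

variable (v : Fin r → R) {i j k : Fin r}
variable {x y z x' y' z' : R}

lemma row3_apply_i : row3 v i j k x y z i = x := by simp [row3]

lemma row3_apply_j (hij : i ≠ j) : row3 v i j k x y z j = y := by simp [row3, Ne.symm hij]

lemma row3_apply_k (hik : i ≠ k) (hjk : j ≠ k) : row3 v i j k x y z k = z := by simp [row3, Ne.symm hik, Ne.symm hjk]

lemma row3_apply_other (l : Fin r) (h1 : l ≠ i) (h2 : l ≠ j) (h3 : l ≠ k) :
    row3 v i j k x y z l = v l := by simp [row3, h1, h2, h3]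

lemma update_row3_i : Function.update (row3 v i j k x y z) i x' = row3 v i j k x' y z := by
  funext l
  rcases eq_or_ne l i with rfl | h
  · rw [Function.update_self, row3_apply_i]
  · rw [Function.update_of_ne h]
    simp [row3, h]

lemma update_row3_j (hij : i ≠ j) : Function.update (row3 v i j k x y z) j y' = row3 v i j k x y' z := by
  funext l
  rcases eq_or_ne l j with rfl | h
  · rw [Function.update_self, row3_apply_j v hij]
  · rw [Function.update_of_ne h]
    simp [row3, h]

lemma update_row3_k (hik : i ≠ k) (hjk : j ≠ k) : Function.update (row3 v i j k x y z) k z' = row3 v i j k x y z' := by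
  funext l
  rcases eq_or_ne l k with rfl | h
  · rw [Function.update_self, row3_apply_k v hik hjk]
  · rw [Function.update_of_ne h]
    simp [row3, h]

lemma row3_congr {x₁ y₁ z₁ : R} (hx : x = x₁) (hy : y = y₁) (hz : z = z₁) :
    row3 v i j k x y z = row3 v i j k x₁ y₁ z₁ := by rw [hx, hy, hz]

/-- The rotation move: `(x,y) ↦ (x,y) + ((x,y)·u)·z` for `z ⊥ u`, 8 elementary ops. -/
lemma ERel.rot (hij : i ≠ j) (hik : i ≠ k) (hjk : j ≠ k) (ui uj zi zj : R) (huz : zi * ui + zj * uj = 0) :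
    ERel (row3 v i j k x y z)
      (row3 v i j k (x + (x * ui + y * uj) * zi) (y + (x * ui + y * uj) * zj) z) := by
  set θ := x * ui + y * uj with hθ
  -- step 1 : add ui * (coord i) to coord k
  have s1 := ERel.step (row3 v i j k x y z) hik ui
  rw [row3_apply_k v hik hjk, row3_apply_i, update_row3_k v hik hjk] at s1
  -- step 2 : add uj * (coord j) to coord k
  have s2 := ERel.step (row3 v i j k x y (z + x * ui)) hjk uj
  rw [row3_apply_k v hik hjk, row3_apply_j v hij, update_row3_k v hik hjk] at s2
  rw [row3_congr v rfl rfl (show z + x * ui + y * uj = z + θ by rw [hθ]; ring)] at s2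
  -- step 3 : add zi * (coord k) to coord i
  have s3 := ERel.step (row3 v i j k x y (z + θ)) (Ne.symm hik) zi
  rw [row3_apply_k v hik hjk, row3_apply_i, update_row3_i] at s3
  -- step 4 : add zj * (coord k) to coord j
  have s4 := ERel.step (row3 v i j k (x + (z + θ) * zi) y (z + θ)) (Ne.symm hjk) zj
  rw [row3_apply_k v hik hjk, row3_apply_j v hij, update_row3_j v hij] at s4
  -- step 5 : add (-ui) * (coord i) to coord k
  have s5 := ERel.step (row3 v i j k (x + (z + θ) * zi) (y + (z + θ) * zj) (z + θ)) hik (-ui)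
  rw [row3_apply_k v hik hjk, row3_apply_i, update_row3_k v hik hjk] at s5
  -- step 6 : add (-uj) * (coord j) to coord k ; coord k returns to z
  have s6 := ERel.step (row3 v i j k (x + (z + θ) * zi) (y + (z + θ) * zj)
      (z + θ + (x + (z + θ) * zi) * (-ui))) hjk (-uj)
  rw [row3_apply_k v hik hjk, row3_apply_j v hij, update_row3_k v hik hjk] at s6
  rw [row3_congr v rfl rfl
      (show z + θ + (x + (z + θ) * zi) * (-ui) + (y + (z + θ) * zj) * (-uj) = z by
        rw [hθ]; linear_combination (-(z + (x * ui + y * uj))) * huz)] at s6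
  -- step 7 : add (-zi) * (coord k) to coord i
  have s7 := ERel.step (row3 v i j k (x + (z + θ) * zi) (y + (z + θ) * zj) z) (Ne.symm hik) (-zi)
  rw [row3_apply_k v hik hjk, row3_apply_i, update_row3_i] at s7
  rw [row3_congr v (show x + (z + θ) * zi + z * (-zi) = x + θ * zi by ring) rfl rfl] at s7
  -- step 8 : add (-zj) * (coord k) to coord j
  have s8 := ERel.step (row3 v i j k (x + θ * zi) (y + (z + θ) * zj) z) (Ne.symm hjk) (-zj)
  rw [row3_apply_k v hik hjk, row3_apply_j v hij, update_row3_j v hij] at s8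
  rw [row3_congr v rfl (show y + (z + θ) * zj + z * (-zj) = y + θ * zj by ring) rfl] at s8
  exact ((((((s1.trans s2).trans s3).trans s4).trans s5).trans s6).trans s7).trans s8

end Row3

section Main

variable {R : Type*} [CommRing R] {r : ℕ}

lemma sum_aux (v w : Fin r → R) (hvw : ∑ l, v l * w l = 1)
    {i j : Fin r} (hij : i ≠ j) (u : Fin r → R)
    (hu : ∀ l, l ≠ i → l ≠ j → u l = v l) (m : R) :
    ∑ l, u l * (if l = i ∨ l = j then 0 else w l * m) = (1 - v i * w i - v j * w j) * m := by
  classical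
  have key : ∀ l, u l * (if l = i ∨ l = j then 0 else w l * m) =
      v l * w l * m - (if l = i then v i * w i * m else 0)
        - (if l = j then v j * w j * m else 0) := by
    intro l
    rcases eq_or_ne l i with rfl | h1
    · simp [hij]
    rcases eq_or_ne l j with rfl | h2
    · simp [h1]
    · simp only [h1, h2, or_self, if_false, if_neg h1, if_neg h2]
      rw [hu l h1 h2]; ring
  rw [Finset.sum_congr rfl (fun l _ => key l), Finset.sum_sub_distrib, Finset.sum_sub_distrib]
  rw [Finset.sum_ite_eq' Finset.univ i (fun _ => v i * w i * m),
      Finset.sum_ite_eq' Finset.univ j (fun _ => v j * w j * m)]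
  simp only [Finset.mem_univ, if_pos]
  rw [← Finset.sum_mul, hvw]
  ring

theorem stmt14' {R : Type*} [CommRing R] (r : ℕ) (hr : 3 ≤ r)
    (v w : Fin r → R) (hvw : ∑ i, v i * w i = 1) (i j : Fin r) :
    ERel (Function.update v i (w i)) (Function.update v j (w j)) := by
  classical
  rcases eq_or_ne i j with rfl | hij
  · exact ERel.refl _
  obtain ⟨k, hki, hkj⟩ : ∃ k : Fin r, k ≠ i ∧ k ≠ j := by
    by_contra h
    push_neg at h
    have hsub : (Finset.univ : Finset (Fin r)) ⊆ {i, j} := by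
      intro l _
      rcases eq_or_ne l i with rfl | h1
      · simp
      · simp [h l h1]
    have h1 := Finset.card_le_card hsub
    have h2 : ({i, j} : Finset (Fin r)).card ≤ 2 :=
      le_trans (Finset.card_insert_le _ _) (by simp)
    rw [Finset.card_univ, Fintype.card_fin] at h1
    omega
  have hik : i ≠ k := hki.symm
  have hjk : j ≠ k := hkj.symm
  -- initial row
  have h0 : Function.update v i (w i) = row3 v i j k (w i) (v j) (v k) := by
    funext l
    rcases eq_or_ne l i with rfl | h1
    · rw [Function.update_self, row3_apply_i]
    · rw [Function.update_of_ne h1]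
      simp only [row3, if_neg h1]
      split_ifs with h2 h3
      · rw [h2]
      · rw [h3]
      · rfl
  -- final row
  have hfin : Function.update v j (w j) = row3 v i j k (v i) (w j) (v k) := by
    funext l
    rcases eq_or_ne l j with rfl | h1
    · rw [Function.update_self, row3_apply_j v hij]
    · rw [Function.update_of_ne h1]
      simp only [row3, if_neg h1]
      split_ifs with h2 h3
      · rw [h2]
      · rw [h3]
      · rfl
  rw [h0, hfin]
  -- Step A : rotation with u = (v i, w j), z = (-(w j), v i)
  have hA := ERel.rot v hij hik hjk (x := w i) (y := v j) (z := v k)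
      (v i) (w j) (-(w j)) (v i) (by ring)
  -- Step A5 : fix coordinate i using the spectator coordinates
  set X₁ := w i + (w i * v i + v j * w j) * -(w j) with hX₁
  set Y₁ := v j + (w i * v i + v j * w j) * v i with hY₁
  have hA5 := ERel.sumstep (row3 v i j k X₁ Y₁ (v k)) i
      (fun l => if l = i ∨ l = j then 0 else w l * -(w j)) (by simp)
  rw [sum_aux v w hvw hij _ (fun l h1 h2 => by
        rcases eq_or_ne l k with rfl | h3
        · exact row3_apply_k v hik hjk
        · exact row3_apply_other v l h1 h2 h3),
      update_row3_i, row3_apply_i] at hA5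
  rw [row3_congr v (show X₁ + (1 - v i * w i - v j * w j) * -(w j) = w i - w j by
        rw [hX₁]; ring) rfl rfl] at hA5
  -- Step A6 : fix coordinate j
  have hA6 := ERel.sumstep (row3 v i j k (w i - w j) Y₁ (v k)) j
      (fun l => if l = i ∨ l = j then 0 else w l * v i) (by simp)
  rw [sum_aux v w hvw hij _ (fun l h1 h2 => by
        rcases eq_or_ne l k with rfl | h3
        · exact row3_apply_k v hik hjk
        · exact row3_apply_other v l h1 h2 h3),
      update_row3_j v hij, row3_apply_j v hij] at hA6
  rw [row3_congr v rfl (show Y₁ + (1 - v i * w i - v j * w j) * v i = v j + v i by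
        rw [hY₁]; ring) rfl] at hA6
  -- Step B : rotation with u = (-(v j), w i), z = (-(w i), -(v j))
  have hB := ERel.rot v hij hik hjk (x := w i - w j) (y := v j + v i) (z := v k)
      (-(v j)) (w i) (-(w i)) (-(v j)) (by ring)
  set θB := (w i - w j) * -(v j) + (v j + v i) * w i with hθB
  set X₂ := w i - w j + θB * -(w i) with hX₂
  set Y₂ := v j + v i + θB * -(v j) with hY₂
  -- Step B5 : fix coordinate i
  have hB5 := ERel.sumstep (row3 v i j k X₂ Y₂ (v k)) i
      (fun l => if l = i ∨ l = j then 0 else w l * -(w i)) (by simp)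
  rw [sum_aux v w hvw hij _ (fun l h1 h2 => by
        rcases eq_or_ne l k with rfl | h3
        · exact row3_apply_k v hik hjk
        · exact row3_apply_other v l h1 h2 h3),
      update_row3_i, row3_apply_i] at hB5
  rw [row3_congr v (show X₂ + (1 - v i * w i - v j * w j) * -(w i) = -(w j) by
        rw [hX₂, hθB]; ring) rfl rfl] at hB5
  -- Step B6 : fix coordinate j
  have hB6 := ERel.sumstep (row3 v i j k (-(w j)) Y₂ (v k)) j
      (fun l => if l = i ∨ l = j then 0 else w l * -(v j)) (by simp)
  rw [sum_aux v w hvw hij _ (fun l h1 h2 => by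
        rcases eq_or_ne l k with rfl | h3
        · exact row3_apply_k v hik hjk
        · exact row3_apply_other v l h1 h2 h3),
      update_row3_j v hij, row3_apply_j v hij] at hB6
  rw [row3_congr v rfl (show Y₂ + (1 - v i * w i - v j * w j) * -(v j) = v i by
        rw [hY₂, hθB]; ring) rfl] at hB6
  -- Step C : (-(w j), v i) → (v i, w j) via three elementary ops
  have hC1 := ERel.step (row3 v i j k (-(w j)) (v i) (v k)) (i := j) (j := i) hij.symm 1
  rw [row3_apply_i, row3_apply_j v hij, update_row3_i] at hC1
  rw [row3_congr v (show -(w j) + v i * 1 = v i - w j by ring) rfl rfl] at hC1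
  have hC2 := ERel.step (row3 v i j k (v i - w j) (v i) (v k)) (i := i) (j := j) hij (-1)
  rw [row3_apply_i, row3_apply_j v hij, update_row3_j v hij] at hC2
  rw [row3_congr v rfl (show v i + (v i - w j) * -1 = w j by ring) rfl] at hC2
  have hC3 := ERel.step (row3 v i j k (v i - w j) (w j) (v k)) (i := j) (j := i) hij.symm 1
  rw [row3_apply_i, row3_apply_j v hij, update_row3_i] at hC3
  rw [row3_congr v (show v i - w j + w j * 1 = v i by ring) rfl rfl] at hC3
  exact ((((((((hA.trans hA5).trans hA6).trans hB).trans hB5).trans hB6).trans hC1).trans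
      hC2).trans hC3)

end Main

theorem stmt14 {R : Type*} [CommRing R] (r : ℕ) (hr : 3 ≤ r)
    (v w : Fin r → R) (hvw : ∑ i, v i * w i = 1) (i j : Fin r) :
    ∃ ε ∈ ElemGroup R r,
      Matrix.vecMul (Function.update v i (w i)) ε = Function.update v j (w j) :=
  stmt14' r hr v w hvw i j
end

section
/- (Suslin) Let B and D be commutative rings, let π : B → D be a surjective ring homomorphism admitting a section (a ring homomorphism γ : D → B with π ∘ γ = id_D), and let J = ker(π). Then for every n ≥ 3, the relative elementary group E_n(B, J) equals E_n(B) ∩ SL_n(B, J), the group of elementary matrices of determinant 1 that are congruent to the identity modulo J. -/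
open Matrix Polynomial

/-- Elementary matrices `eᵢⱼ(a)` with `a ∈ J`. -/
def ElemSetRel (R : Type*) [CommRing R] (n : ℕ) (J : Ideal R) :
    Set (Matrix (Fin n) (Fin n) R) :=
  { E | ∃ (i j : Fin n) (a : R), i ≠ j ∧ a ∈ J ∧ E = 1 + Matrix.single i j a }

/-- The relative elementary group `Eₙ(R, J)`: the normal closure in `Eₙ(R)` of the
subgroup `Eₙ(J)` generated by elementary matrices with offdiagonal entry in `J`. -/
def ElemGroupRel (R : Type*) [CommRing R] (n : ℕ) (J : Ideal R) :
    Submonoid (Matrix (Fin n) (Fin n) R) :=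
  Submonoid.closure
    { x | ∃ ε ε' e : Matrix (Fin n) (Fin n) R,
        ε ∈ ElemGroup R n ∧ ε * ε' = 1 ∧ e ∈ ElemSetRel R n J ∧ x = ε * e * ε' }

section Aux

variable {B D : Type*} [CommRing B] [CommRing D] {n : ℕ}

lemma transvection_mem_elemGroup {i j : Fin n} (hij : i ≠ j) (a : B) :
    Matrix.transvection i j a ∈ ElemGroup B n :=
  Submonoid.subset_closure ⟨i, j, a, hij, rfl⟩

lemma transvection_mul_neg {i j : Fin n} (hij : i ≠ j) (a : B) :
    Matrix.transvection i j a * Matrix.transvection i j (-a) = 1 := by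
  rw [Matrix.transvection_mul_transvection_same _ _ hij, add_neg_cancel,
    Matrix.transvection_zero]

lemma elemGroup_exists_inv {x : Matrix (Fin n) (Fin n) B} (hx : x ∈ ElemGroup B n) :
    ∃ y ∈ ElemGroup B n, x * y = 1 ∧ y * x = 1 := by
  induction hx using Submonoid.closure_induction with
  | mem z hz =>
    obtain ⟨i, j, a, hij, rfl⟩ := hz
    refine ⟨Matrix.transvection i j (-a), transvection_mem_elemGroup hij _,
      transvection_mul_neg hij a, ?_⟩
    have := transvection_mul_neg hij (-a)
    rwa [neg_neg] at this
  | one => exact ⟨1, one_mem _, one_mul 1, one_mul 1⟩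
  | mul z w _ _ hz hw =>
    obtain ⟨z', hz', hz1, hz2⟩ := hz
    obtain ⟨w', hw', hw1, hw2⟩ := hw
    refine ⟨w' * z', mul_mem hw' hz', ?_, ?_⟩
    · calc z * w * (w' * z') = z * (w * w') * z' := by simp only [mul_assoc]
        _ = 1 := by rw [hw1, mul_one, hz1]
    · calc w' * z' * (z * w) = w' * (z' * z) * w := by simp only [mul_assoc]
        _ = 1 := by rw [hz2, mul_one, hw2]

lemma conj_mem_elemGroupRel {J : Ideal B} {g g' z : Matrix (Fin n) (Fin n) B}
    (hg : g ∈ ElemGroup B n) (hgg' : g * g' = 1)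
    (hz : z ∈ ElemGroupRel B n J) : g * z * g' ∈ ElemGroupRel B n J := by
  have hg'g : g' * g = 1 := mul_eq_one_comm.mp hgg'
  induction hz using Submonoid.closure_induction with
  | mem w hw =>
    obtain ⟨ε, ε', e, hε, hεε', he, rfl⟩ := hw
    refine Submonoid.subset_closure ⟨g * ε, ε' * g', e, mul_mem hg hε, ?_, he, by
      simp only [mul_assoc]⟩
    calc g * ε * (ε' * g') = g * (ε * ε') * g' := by simp only [mul_assoc]
      _ = 1 := by rw [hεε', mul_one, hgg']
  | one => rw [mul_one, hgg']; exact one_mem _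
  | mul z w _ _ hz' hw' =>
    have heq : g * (z * w) * g' = (g * z * g') * (g * w * g') := by
      calc g * (z * w) * g' = g * (z * ((g' * g) * (w * g'))) := by
            rw [hg'g, one_mul]; simp only [mul_assoc]
        _ = (g * z * g') * (g * w * g') := by simp only [mul_assoc]
    rw [heq]; exact mul_mem hz' hw'

lemma mapMatrix_transvection (f : B →+* D) (i j : Fin n) (a : B) :
    f.mapMatrix (Matrix.transvection i j a) = Matrix.transvection i j (f a) := by
  ext i' j'
  simp [Matrix.transvection, Matrix.single_apply, Matrix.one_apply, Matrix.add_apply,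
    apply_ite f, RingHom.mapMatrix_apply, Matrix.map_apply]

lemma key_lemma (π : B →+* D) (γ : D →+* B) (hsec : π.comp γ = RingHom.id D) :
    ∀ L : List (Fin n × Fin n × B), (∀ t ∈ L, t.1 ≠ t.2.1) →
    (L.map fun t => Matrix.transvection t.1 t.2.1 t.2.2).prod *
      ((L.map fun t => Matrix.transvection t.1 t.2.1 (-(γ (π t.2.2)))).reverse).prod
      ∈ ElemGroupRel B n (RingHom.ker π) := by
  intro L
  induction L with
  | nil => intro _; simpa using one_mem _
  | cons t L ih =>
    intro hL
    obtain ⟨i, j, a⟩ := t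
    have hij : i ≠ j := hL _ List.mem_cons_self
    have hL' : ∀ s ∈ L, s.1 ≠ s.2.1 := fun s hs => hL s (List.mem_cons_of_mem _ hs)
    simp only [List.map_cons, List.prod_cons, List.reverse_cons, List.prod_append,
      List.prod_cons, List.prod_nil, mul_one]
    set b := γ (π a) with hb
    set A := (L.map fun t => Matrix.transvection t.1 t.2.1 t.2.2).prod with hA
    set rA := ((L.map fun t => Matrix.transvection t.1 t.2.1 (-(γ (π t.2.2)))).reverse).prod
      with hrA
    have h1 : Matrix.transvection i j (-b) * Matrix.transvection i j b = 1 := by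
      have := transvection_mul_neg hij (-b); rwa [neg_neg] at this
    have hsplit : (Matrix.transvection i j a * A) * (rA * Matrix.transvection i j (-b)) =
        (Matrix.transvection i j a * Matrix.transvection i j (-b)) *
          (Matrix.transvection i j b * (A * rA) * Matrix.transvection i j (-b)) := by
      calc (Matrix.transvection i j a * A) * (rA * Matrix.transvection i j (-b))
          = Matrix.transvection i j a * (A * (rA * Matrix.transvection i j (-b))) := by
            simp only [mul_assoc]
        _ = Matrix.transvection i j a *
              ((Matrix.transvection i j (-b) * Matrix.transvection i j b) *
                (A * (rA * Matrix.transvection i j (-b)))) := by rw [h1, one_mul]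
        _ = (Matrix.transvection i j a * Matrix.transvection i j (-b)) *
              (Matrix.transvection i j b * (A * rA) * Matrix.transvection i j (-b)) := by
            simp only [mul_assoc]
    rw [hsplit]
    have hmemJ : a - b ∈ RingHom.ker π := by
      rw [RingHom.mem_ker, map_sub, hb, ← RingHom.comp_apply, hsec, RingHom.id_apply, sub_self]
    have hfirst : Matrix.transvection i j a * Matrix.transvection i j (-b)
        ∈ ElemGroupRel B n (RingHom.ker π) := by
      rw [Matrix.transvection_mul_transvection_same _ _ hij, ← sub_eq_add_neg]
      exact Submonoid.subset_closure
        ⟨1, 1, Matrix.transvection i j (a - b), one_mem _, mul_one 1,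
          ⟨i, j, a - b, hij, hmemJ, rfl⟩, by rw [one_mul, mul_one]⟩
    exact mul_mem hfirst
      (conj_mem_elemGroupRel (transvection_mem_elemGroup hij b)
        (transvection_mul_neg hij b) (ih hL'))

lemma rev_prod_mul (π : B →+* D) (γ : D →+* B) :
    ∀ L : List (Fin n × Fin n × B), (∀ t ∈ L, t.1 ≠ t.2.1) →
    ((L.map fun t => Matrix.transvection t.1 t.2.1 (-(γ (π t.2.2)))).reverse).prod *
      (L.map fun t => Matrix.transvection t.1 t.2.1 (γ (π t.2.2))).prod = 1 := by
  intro L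
  induction L with
  | nil => intro _; simp
  | cons t L ih =>
    intro hL
    obtain ⟨i, j, a⟩ := t
    have hij : i ≠ j := hL _ List.mem_cons_self
    have hL' : ∀ s ∈ L, s.1 ≠ s.2.1 := fun s hs => hL s (List.mem_cons_of_mem _ hs)
    simp only [List.map_cons, List.prod_cons, List.reverse_cons, List.prod_append,
      List.prod_cons, List.prod_nil, mul_one]
    set b := γ (π a) with hb
    set A := (L.map fun t => Matrix.transvection t.1 t.2.1 (γ (π t.2.2))).prod with hA
    set rA := ((L.map fun t => Matrix.transvection t.1 t.2.1 (-(γ (π t.2.2)))).reverse).prod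
      with hrA
    have h1 : Matrix.transvection i j (-b) * Matrix.transvection i j b = 1 := by
      have := transvection_mul_neg hij (-b); rwa [neg_neg] at this
    calc (rA * Matrix.transvection i j (-b)) * (Matrix.transvection i j b * A)
        = rA * ((Matrix.transvection i j (-b) * Matrix.transvection i j b) * A) := by
          simp only [mul_assoc]
      _ = rA * A := by rw [h1, one_mul]
      _ = 1 := ih hL'

lemma exists_triples :
    ∀ l : List (Matrix (Fin n) (Fin n) B), (∀ y ∈ l, y ∈ ElemSet B n) →
    ∃ T : List (Fin n × Fin n × B), (∀ t ∈ T, t.1 ≠ t.2.1) ∧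
      (T.map fun t => Matrix.transvection t.1 t.2.1 t.2.2).prod = l.prod := by
  intro l
  induction l with
  | nil => exact fun _ => ⟨[], by simp, by simp⟩
  | cons y l ih =>
    intro h
    obtain ⟨i, j, a, hij, hy⟩ := h y List.mem_cons_self
    obtain ⟨T, hT, hTp⟩ := ih fun z hz => h z (List.mem_cons_of_mem _ hz)
    refine ⟨(i, j, a) :: T, ?_, ?_⟩
    · intro t ht
      rcases List.mem_cons.mp ht with rfl | h
      · exact hij
      · exact hT t h
    · simp only [List.map_cons, List.prod_cons, hTp, hy]
      rfl

lemma pi_mapMatrix_one_iff (π : B →+* D) (x : Matrix (Fin n) (Fin n) B) :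
    π.mapMatrix x = 1 ↔
      ∀ i j, x i j - (1 : Matrix (Fin n) (Fin n) B) i j ∈ RingHom.ker π := by
  have hone : ∀ i j : Fin n, π ((1 : Matrix (Fin n) (Fin n) B) i j)
      = (1 : Matrix (Fin n) (Fin n) D) i j := by
    intro i j
    simp [Matrix.one_apply, apply_ite π]
  constructor
  · intro h i j
    rw [RingHom.mem_ker, map_sub, hone, sub_eq_zero]
    have := congrFun (congrFun (congrArg (fun M => M) h) i) j
    calc π (x i j) = (π.mapMatrix x) i j := rfl
      _ = (1 : Matrix (Fin n) (Fin n) D) i j := by rw [h]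
  · intro h
    ext i j
    have := h i j
    rw [RingHom.mem_ker, map_sub, hone, sub_eq_zero] at this
    calc (π.mapMatrix x) i j = π (x i j) := rfl
      _ = (1 : Matrix (Fin n) (Fin n) D) i j := this

end Aux

theorem stmt16 {B D : Type*} [CommRing B] [CommRing D] (π : B →+* D)
    (hπ : Function.Surjective π) (γ : D →+* B) (hsec : π.comp γ = RingHom.id D)
    (n : ℕ) (hn : 3 ≤ n) (x : Matrix (Fin n) (Fin n) B) :
    x ∈ ElemGroupRel B n (RingHom.ker π) ↔
      x ∈ ElemGroup B n ∧ x.det = 1 ∧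
        ∀ i j, x i j - (1 : Matrix (Fin n) (Fin n) B) i j ∈ RingHom.ker π := by
  constructor
  · intro hx
    have main : x ∈ ElemGroup B n ∧ x.det = 1 ∧ π.mapMatrix x = 1 := by
      induction hx using Submonoid.closure_induction with
      | mem z hz =>
        obtain ⟨ε, ε', e, hε, hεε', ⟨i, j, a, hij, haJ, rfl⟩, rfl⟩ := hz
        obtain ⟨ε'', hε'', h1, h2⟩ := elemGroup_exists_inv hε
        have hε'eq : ε' = ε'' := by
          calc ε' = (ε'' * ε) * ε' := by rw [h2, one_mul]
            _ = ε'' * (ε * ε') := by rw [mul_assoc]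
            _ = ε'' := by rw [hεε', mul_one]
        have heT : (1 + Matrix.single i j a) = Matrix.transvection i j a := rfl
        refine ⟨?_, ?_, ?_⟩
        · rw [heT]
          exact mul_mem (mul_mem hε (transvection_mem_elemGroup hij a)) (hε'eq ▸ hε'')
        · rw [heT, Matrix.det_mul, Matrix.det_mul, Matrix.det_transvection_of_ne _ _ hij,
            mul_one, ← Matrix.det_mul, hεε', Matrix.det_one]
        · rw [heT, _root_.map_mul, _root_.map_mul, mapMatrix_transvection, RingHom.mem_ker.mp haJ,
            Matrix.transvection_zero, mul_one, ← _root_.map_mul, hεε', _root_.map_one]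
      | one => exact ⟨one_mem _, Matrix.det_one, _root_.map_one _⟩
      | mul z w _ _ hz hw =>
        exact ⟨mul_mem hz.1 hw.1, by rw [Matrix.det_mul, hz.2.1, hw.2.1, mul_one],
          by rw [_root_.map_mul, hz.2.2, hw.2.2, mul_one]⟩
    exact ⟨main.1, main.2.1, (pi_mapMatrix_one_iff π x).mp main.2.2⟩
  · rintro ⟨hE, hdet, hker⟩
    have hmap : π.mapMatrix x = 1 := (pi_mapMatrix_one_iff π x).mpr hker
    obtain ⟨l, hl, hprod⟩ := Submonoid.exists_list_of_mem_closure hE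
    obtain ⟨T, hT, hTx⟩ := exists_triples l hl
    rw [hprod] at hTx
    have hkey := key_lemma π γ hsec T hT
    have hBT : (T.map fun t => Matrix.transvection t.1 t.2.1 (γ (π t.2.2))).prod = 1 := by
      have hcomp : (T.map fun t => Matrix.transvection t.1 t.2.1 (γ (π t.2.2))).prod =
          γ.mapMatrix (π.mapMatrix
            ((T.map fun t => Matrix.transvection t.1 t.2.1 t.2.2).prod)) := by
        rw [map_list_prod, map_list_prod, List.map_map, List.map_map]
        congr 1
        apply List.map_congr_left
        intro t _
        simp only [Function.comp_apply, mapMatrix_transvection]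
      rw [hcomp, hTx, hmap, _root_.map_one]
    have hrev := rev_prod_mul π γ T hT
    rw [hBT, mul_one] at hrev
    rw [hTx, hrev, mul_one] at hkey
    exact hkey
end

section
/- (Karoubi) Let R be a commutative ring in which 2 is a unit, let φ ∈ GL_{2k}(R) and n ∈ M_{2k}(R), and suppose that φ + nX is an alternating matrix over R[X] (skew-symmetric with zero diagonal) which is invertible over R[X], i.e. φ + nX ∈ GL_{2k}(R[X]). Then φ + nX is congruent to (φ^{-1})^t over R[X]: there exists W ∈ GL_{2k}(R[X]) with W(0) = φ such that φ + nX = W^t · (φ^{-1})^t · W. -/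
open Matrix Polynomial

/-- If `1 + X·a` is a unit in `S[X]`, then `a` is nilpotent. -/
theorem aux_nilp_of_unit {S : Type*} [Ring S] (a : S)
    (h : IsUnit (1 + (X : Polynomial S) * C a)) : IsNilpotent a := by
  obtain ⟨v, hv⟩ := h
  set B : Polynomial S := ↑v⁻¹ with hB
  have h1 : (1 + (X : Polynomial S) * C a) * B = 1 := by rw [← hv]; exact v.mul_inv
  have hc0 : B.coeff 0 = 1 := by
    have := congrArg (fun q => Polynomial.coeff q 0) h1
    simpa [mul_coeff_zero] using this
  have hc : ∀ m, B.coeff (m + 1) = -(a * B.coeff m) := by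
    intro m
    have h2 := congrArg (fun q => Polynomial.coeff q (m + 1)) h1
    simp only [add_mul, one_mul, mul_assoc, coeff_add, coeff_X_mul, coeff_C_mul,
      coeff_one, if_neg (Nat.succ_ne_zero m)] at h2
    exact eq_neg_of_add_eq_zero_left h2
  have hpow : ∀ m, B.coeff m = (-a) ^ m := by
    intro m
    induction m with
    | zero => simpa using hc0
    | succ m ih => rw [hc m, ih, ← neg_mul, ← pow_succ']
  have hz : (-a) ^ (B.natDegree + 1) = 0 := by
    rw [← hpow]
    exact Polynomial.coeff_eq_zero_of_natDegree_lt (Nat.lt_succ_self _)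
  have : IsNilpotent (-a) := ⟨B.natDegree + 1, hz⟩
  simpa using this.neg

/-- Square roots of `1 + X` modulo `X^(j+2)`, over a ring where 2 is invertible. -/
theorem aux_sqrt_poly {R : Type*} [CommRing R] (half : R) (hh : 2 * half = 1) (j : ℕ) :
    ∃ p q : Polynomial R, p.coeff 0 = 1 ∧ p ^ 2 = 1 + X + X ^ (j + 1) * q := by
  induction j with
  | zero => exact ⟨1, -1, by simp, by ring⟩
  | succ j ih =>
    obtain ⟨p, q, hp0, hpq⟩ := ih
    have hx : (X : Polynomial R) ∣ (1 - p) := by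
      rw [X_dvd_iff]; simp [hp0]
    obtain ⟨r, hr⟩ := hx
    have hh' : (2 : Polynomial R) * C half = 1 := by
      have h3 := congrArg (C : R →+* Polynomial R) hh
      rw [_root_.map_mul, _root_.map_one, map_ofNat] at h3
      exact h3
    refine ⟨p + X ^ (j + 1) * (-(C half * q)), q * r + X ^ j * (-(C half * q)) ^ 2, ?_, ?_⟩
    · simp [coeff_add, mul_coeff_zero, coeff_X_pow, hp0]
    · linear_combination hpq + (X ^ (j + 1) * q) * hr - (X ^ (j + 1) * p * q) * hh'

theorem stmt18 {R : Type*} [CommRing R] (h2 : IsUnit (2 : R)) (k : ℕ)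
    (φ N : Matrix (Fin (2 * k)) (Fin (2 * k)) R) (hφ : IsUnit φ)
    -- the linear polynomial matrix `φ + N·X`
    (P : Matrix (Fin (2 * k)) (Fin (2 * k)) (Polynomial R))
    (hP : P = φ.map (Polynomial.C) + (Polynomial.X : Polynomial R) • N.map (Polynomial.C))
    -- alternating: skew-symmetric with zero diagonal
    (halt : Pᵀ = -P ∧ ∀ i, P i i = 0)
    -- invertible over `R[X]`
    (hunit : IsUnit P) :
    ∃ W : Matrix (Fin (2 * k)) (Fin (2 * k)) (Polynomial R), IsUnit W ∧
      W.map (Polynomial.eval 0) = φ ∧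
      P = Wᵀ * (φ⁻¹)ᵀ.map (Polynomial.C) * W := by
  have hdet : IsUnit φ.det := (Matrix.isUnit_iff_isUnit_det φ).mp hφ
  have hskew : ∀ i j, P j i = -(P i j) := by
    intro i j
    have := congrFun (congrFun halt.1 i) j
    simpa [Matrix.transpose_apply, Matrix.neg_apply] using this
  have hentry : ∀ i j, P i j = C (φ i j) + X * C (N i j) := by
    intro i j
    rw [hP]
    simp [Matrix.add_apply, Matrix.map_apply, Matrix.smul_apply, smul_eq_mul]
  have hφt : φᵀ = -φ := by
    ext i j
    have h1 := hskew i j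
    rw [hentry j i, hentry i j] at h1
    have h2 := congrArg (fun p => p.coeff 0) h1
    simpa [coeff_add, coeff_neg, mul_coeff_zero, coeff_X_zero] using h2
  have hNt : Nᵀ = -N := by
    ext i j
    have h1 := hskew i j
    rw [hentry j i, hentry i j] at h1
    have h2 := congrArg (fun p => p.coeff 1) h1
    simpa [coeff_add, coeff_neg, coeff_C, mul_comm X, coeff_C_mul] using h2
  set M : Matrix (Fin (2 * k)) (Fin (2 * k)) R := φ⁻¹ * N with hM
  have hφM : φ * M = N := by
    rw [hM, ← mul_assoc, Matrix.mul_nonsing_inv φ hdet, one_mul]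
  have hMtφ : Mᵀ * φ = N := by
    have h1 : φᵀ * M = -N := by rw [hφt, neg_mul, hφM]
    have h2 := congrArg Matrix.transpose h1
    rw [Matrix.transpose_mul, Matrix.transpose_transpose, Matrix.transpose_neg, hNt,
      neg_neg] at h2
    exact h2
  set t : Matrix (Fin (2 * k)) (Fin (2 * k)) (Polynomial R) := (X : Polynomial R) • M.map C
    with ht
  have hmapmul : ∀ (A B : Matrix (Fin (2 * k)) (Fin (2 * k)) R),
      (A * B).map (C : R → Polynomial R) = A.map C * B.map C := by
    intro A B
    exact Matrix.map_mul
  have hfact : P = φ.map C * (1 + t) := by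
    rw [hP, ht, mul_add, mul_one, Matrix.mul_smul, ← hmapmul, hφM]
  have hφC : IsUnit (φ.map (C : R → Polynomial R)) := by
    have := hφ.map (RingHom.mapMatrix (C : R →+* Polynomial R))
    simpa using this
  have h1t : IsUnit (1 + t) := by
    obtain ⟨u, hu⟩ := hφC
    have h3 : (1 + t) = (↑u⁻¹ : Matrix _ _ _) * P := by
      rw [hfact, ← hu, ← mul_assoc, Units.inv_mul, one_mul]
    rw [h3]
    exact u⁻¹.isUnit.mul hunit
  -- nilpotency of M
  have hMnil : IsNilpotent M := by
    apply aux_nilp_of_unit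
    have h4 := h1t.map (matPolyEquiv :
      Matrix (Fin (2 * k)) (Fin (2 * k)) (Polynomial R) ≃ₐ[R] _)
    rwa [_root_.map_add, _root_.map_one, ht, matPolyEquiv_map_smul, matPolyEquiv_map_C,
      Polynomial.map_X] at h4
  obtain ⟨m, hm⟩ := hMnil
  have htm : t ^ m = 0 := by
    rw [ht, _root_.smul_pow]
    have : (M.map (C : R → Polynomial R)) ^ m = (M ^ m).map C := by
      have := _root_.map_pow (RingHom.mapMatrix (C : R →+* Polynomial R)) M m
      simpa using this.symm
    rw [this, hm]
    simp
  -- square root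
  obtain ⟨hu2, hh⟩ : ∃ half : R, 2 * half = 1 := by
    obtain ⟨u, hu⟩ := h2
    exact ⟨↑u⁻¹, by rw [← hu]; exact u.mul_inv⟩
  obtain ⟨p, q, hp0, hpq⟩ := aux_sqrt_poly hu2 hh m
  set U : Matrix (Fin (2 * k)) (Fin (2 * k)) (Polynomial R) := aeval t p with hUdef
  have hUsq : U * U = 1 + t := by
    have h5 : U * U = aeval t (p ^ 2) := by rw [_root_.map_pow, pow_two]
    rw [h5, hpq]
    rw [_root_.map_add, _root_.map_add, _root_.map_one, aeval_X, _root_.map_mul, _root_.map_pow, aeval_X, pow_succ, htm]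
    simp
  -- self-adjointness
  have hbase : tᵀ * φ.map C = φ.map C * t := by
    rw [ht, Matrix.transpose_smul, ← Matrix.transpose_map, Matrix.smul_mul, Matrix.mul_smul,
      ← hmapmul, ← hmapmul, hMtφ, hφM]
  have hpowsa : ∀ i : ℕ, (t ^ i)ᵀ * φ.map C = φ.map C * t ^ i := by
    intro i
    induction i with
    | zero => simp
    | succ i ih =>
      have h7 : (t ^ (i + 1))ᵀ = tᵀ * (t ^ i)ᵀ := by rw [pow_succ, Matrix.transpose_mul]
      rw [h7, mul_assoc, ih, ← mul_assoc, hbase, mul_assoc, ← pow_succ']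
  have hsa : ∀ q' : Polynomial R, (aeval t q')ᵀ * φ.map C = φ.map C * aeval t q' := by
    intro q'
    induction q' using Polynomial.induction_on' with
    | add f g hf hg => rw [_root_.map_add, Matrix.transpose_add, add_mul, mul_add, hf, hg]
    | monomial n a =>
      rw [aeval_monomial, ← Algebra.smul_def, Matrix.transpose_smul, Matrix.smul_mul,
        Matrix.mul_smul, hpowsa n]
  have hUt : Uᵀ * φ.map C = φ.map C * U := hsa p
  -- evaluation at 0
  set ε : Matrix (Fin (2 * k)) (Fin (2 * k)) (Polynomial R) →+*
      Matrix (Fin (2 * k)) (Fin (2 * k)) R := (evalRingHom 0).mapMatrix with hε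
  have hεt : ε t = 0 := by
    ext i j
    simp [hε, ht, Matrix.map_apply, Matrix.smul_apply, smul_eq_mul]
  have hεalg : ∀ a : R, ε (algebraMap R _ a) = algebraMap R _ a := by
    intro a
    ext i j
    simp only [hε, RingHom.mapMatrix_apply, Matrix.map_apply, Matrix.algebraMap_matrix_apply]
    split <;> simp
  have hev : ∀ q' : Polynomial R, ε (aeval t q') = algebraMap R _ (q'.coeff 0) := by
    intro q'
    induction q' using Polynomial.induction_on' with
    | add f g hf hg => simp only [_root_.map_add, coeff_add, hf, hg]
    | monomial n a =>
      rw [aeval_monomial, _root_.map_mul, _root_.map_pow, hεt, hεalg, coeff_monomial]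
      cases n with
      | zero => simp
      | succ n => simp [zero_pow]
  have hεU : ε U = 1 := by rw [hUdef, hev, hp0, _root_.map_one]
  -- U is a unit
  have hUu : IsUnit U := by
    obtain ⟨v, hv⟩ := h1t
    refine (Matrix.isUnit_iff_isUnit_det U).mpr (Matrix.isUnit_det_of_right_inverse
      (B := U * (↑v⁻¹ : Matrix (Fin (2 * k)) (Fin (2 * k)) (Polynomial R))) ?_)
    rw [← mul_assoc, hUsq, ← hv, Units.mul_inv]
  refine ⟨φ.map C * U, hφC.mul hUu, ?_, ?_⟩
  · have h6 : (φ.map (C : R → Polynomial R) * U).map (eval 0) = ε (φ.map C * U) := rfl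
    rw [h6, _root_.map_mul, hεU, mul_one]
    ext i j
    simp [hε, Matrix.map_apply]
  · have hkey : (φᵀ).map (C : R → Polynomial R) * (φ⁻¹)ᵀ.map C = 1 := by
      rw [← hmapmul, ← Matrix.transpose_mul, Matrix.nonsing_inv_mul φ hdet]
      simp
    rw [Matrix.transpose_mul, ← Matrix.transpose_map]
    have hassoc : Uᵀ * (φᵀ).map (C : R → Polynomial R) * (φ⁻¹)ᵀ.map C * (φ.map C * U)
        = Uᵀ * (((φᵀ).map C * (φ⁻¹)ᵀ.map C) * (φ.map C * U)) := by
      simp only [mul_assoc]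
    rw [hassoc, hkey, one_mul, ← mul_assoc, hUt, mul_assoc, hUsq, ← hfact]
end
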